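/- Let $U : [-\bar\tau, T] \to H$ be a continuous solution of the Duhamel formula $U(t) = S(t) U_0 + \int_0^t S(t-s) k(s) B U(s-\tau(s)) ds$ on $[0,T]$, with $U = f$ on $[-\bar\tau,0]$, $U_0 = f(0)$, where $\|S(t)\| \le M$, $B$ bounded, $\tau(s) \in [0,\bar\tau]$, and $M \|B\| \int_0^T |k(s)| ds \le 1$. Then for all $t \in [0,T]$, $\|U(t)\| \le e \left( M \|U_0\| + \max_{r \in [-\bar\tau, 0]} \|f(r)\| \right)$. -/

import Mathlib

/-!
Put `g = M‖B‖|k|`, `G t = ∫₀ᵗ g` and `A = M‖f 0‖ + sup ‖f‖`. The Duhamel formula gives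
`‖U t‖ ≤ A + ∫₀ᵗ g P` for every continuous `P` dominating the delayed values `‖U (s - τ s)‖`;
delayed values at negative times are at most `A`. Starting from a bound `C` of the continuous
function `‖U‖` on the compact interval and iterating, `‖U t‖ ≤ A e^{G t} + C (G t)ⁿ / n!` for all
`n`: the step is the chain rule `∫₀ᵗ g · h'(G) = h (G t) - h 0` for the absolutely continuous
primitive `G`, applied to `h x = A eˣ + C xⁿ⁺¹ / (n+1)!`, together with the monotonicity of `G`.
Letting `n → ∞` and using `G t ≤ G T ≤ 1` gives `‖U t‖ ≤ e A`.
-/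

open Real Set MeasureTheory Filter
open scoped NNReal Nat

theorem LipschitzOnWith.comp_absolutelyContinuousOnInterval {X Y : Type*} [PseudoMetricSpace X]
    [PseudoMetricSpace Y] {h : X → Y} {f : ℝ → X} {K : ℝ≥0} {s : Set X} {a b : ℝ}
    (hh : LipschitzOnWith K h s) (hf : AbsolutelyContinuousOnInterval f a b)
    (hfs : MapsTo f (uIcc a b) s) : AbsolutelyContinuousOnInterval (h ∘ f) a b := by
  unfold AbsolutelyContinuousOnInterval at hf ⊢
  refine squeeze_zero' (Eventually.of_forall fun _ => Finset.sum_nonneg fun _ _ => dist_nonneg)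
    ?_ (by simpa using hf.const_mul (K : ℝ))
  filter_upwards [mem_inf_of_right (mem_principal_self _)] with E hE
  rw [Finset.mul_sum]
  exact Finset.sum_le_sum fun i hi =>
    hh.dist_le_mul _ (hfs (hE.1 i hi).1) _ (hfs (hE.1 i hi).2)

theorem integral_mul_comp_primitive {g h h' : ℝ → ℝ} {a b : ℝ}
    (hg : IntervalIntegrable g volume a b) (hh : ∀ x, HasDerivAt h (h' x) x)
    (hh' : Continuous h') :
    ∫ x in a..b, g x * h' (∫ t in a..x, g t) = h (∫ t in a..b, g t) - h 0 := by
  set G := fun x => ∫ t in a..x, g t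
  have hG : AbsolutelyContinuousOnInterval G a b :=
    hg.absolutelyContinuousOnInterval_intervalIntegral left_mem_uIcc
  obtain ⟨R, hR⟩ := isCompact_uIcc.exists_bound_of_continuousOn hG.continuousOn
  have hGR : MapsTo G (uIcc a b) (Icc (-R) R) := fun x hx => abs_le.1 (hR x hx)
  have hC1 : ContDiff ℝ 1 h := contDiff_one_iff_deriv.2
    ⟨fun x => (hh x).differentiableAt, by simpa [funext fun x => (hh x).deriv] using hh'⟩
  obtain ⟨K, hK⟩ := hC1.contDiffOn.exists_lipschitzOnWith one_ne_zero (convex_Icc _ _)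
    isCompact_Icc
  have hhG := (hK.comp_absolutelyContinuousOnInterval hG hGR).integral_deriv_eq_sub
  simp only [Function.comp_apply, G, intervalIntegral.integral_same] at hhG
  rw [← hhG]
  refine intervalIntegral.integral_congr_ae ?_
  filter_upwards [hg.ae_hasDerivAt_integral] with x hx hxab
  rw [((hh _).comp x (hx (uIoc_subset_uIcc hxab) a left_mem_uIcc)).deriv, mul_comm]

theorem hasDerivAt_mul_exp_add_mul_pow_div_factorial (A C x : ℝ) (n : ℕ) :
    HasDerivAt (fun x => A * exp x + C * (x ^ (n + 1) / (n + 1)!))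
      (A * exp x + C * (x ^ n / n !)) x := by
  refine (((hasDerivAt_exp x).const_mul A).add
    (((hasDerivAt_pow (n + 1) x).div_const ((n + 1)! : ℝ)).const_mul C)).congr_deriv ?_
  rw [Nat.factorial_succ]
  push_cast
  field_simp

section DelayGronwall

variable {u σ g : ℝ → ℝ} {A T : ℝ}

theorem le_mul_exp_add_pow_div_factorial_of_delay (hA : 0 ≤ A) (hg : ∀ s ∈ Icc 0 T, 0 ≤ g s)
    (hgi : IntervalIntegrable g volume 0 T) (hσ : ∀ s ∈ Icc 0 T, σ s ≤ s)
    (hpast : ∀ s ∈ Icc 0 T, σ s < 0 → u (σ s) ≤ A)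
    (hstep : ∀ t ∈ Icc 0 T, ∀ P : ℝ → ℝ, ContinuousOn P (Icc 0 T) →
      (∀ s ∈ Icc 0 t, u (σ s) ≤ P s) → u t ≤ A + ∫ s in 0..t, g s * P s)
    {C : ℝ} (hC : 0 ≤ C) (huC : ∀ t ∈ Icc 0 T, u t ≤ C) (n : ℕ) :
    ∀ t ∈ Icc 0 T,
      u t ≤ A * exp (∫ s in 0..t, g s) + C * ((∫ s in 0..t, g s) ^ n / n !) := by
  set G := fun t => ∫ s in 0..t, g s
  have hG0 : ∀ s ∈ Icc 0 T, 0 ≤ G s := fun s hs =>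
    intervalIntegral.integral_nonneg hs.1 fun x hx => hg x ⟨hx.1, hx.2.trans hs.2⟩
  have hGmono : ∀ s ∈ Icc 0 T, ∀ r ∈ Icc 0 s, G r ≤ G s := fun s hs r hr =>
    intervalIntegral.integral_mono_interval le_rfl hr.1 hr.2
      (ae_restrict_of_forall_mem measurableSet_Ioc fun x hx => hg x ⟨hx.1.le, hx.2.trans hs.2⟩)
      (hgi.mono_set (uIcc_subset_uIcc left_mem_uIcc (by rwa [uIcc_of_le (hs.1.trans hs.2)])))
  have hGcont : ContinuousOn G (uIcc 0 T) :=
    (hgi.absolutelyContinuousOnInterval_intervalIntegral left_mem_uIcc).continuousOn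
  induction n with
  | zero =>
    intro t ht
    have := hG0 t ht
    simpa using (huC t ht).trans (le_add_of_nonneg_left (by positivity))
  | succ n ih =>
    intro t ht
    set P := fun s => A * exp (G s) + C * (G s ^ n / n !)
    have hPcont : ContinuousOn P (Icc 0 T) := by
      rw [← uIcc_of_le (ht.1.trans ht.2)]
      fun_prop
    have hbound : ∀ s ∈ Icc 0 t, u (σ s) ≤ P s := by
      intro s hs
      have hsT : s ∈ Icc 0 T := ⟨hs.1, hs.2.trans ht.2⟩
      have hGs := hG0 s hsT
      rcases lt_or_ge (σ s) 0 with hneg | hnonneg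
      · calc u (σ s) ≤ A := hpast s hsT hneg
          _ ≤ A * exp (G s) := le_mul_of_one_le_right hA (one_le_exp hGs)
          _ ≤ P s := le_add_of_nonneg_right (by positivity)
      · have hσs : σ s ∈ Icc 0 s := ⟨hnonneg, hσ s hsT⟩
        have hσT : σ s ∈ Icc 0 T := ⟨hnonneg, hσs.2.trans hsT.2⟩
        have hGσ := hG0 (σ s) hσT
        have hGσs := hGmono s hsT (σ s) hσs
        refine (ih (σ s) hσT).trans ?_
        dsimp only [P]
        gcongr
    have hint := integral_mul_comp_primitive
      (hgi.mono_set (uIcc_subset_uIcc left_mem_uIcc (Icc_subset_uIcc ht)))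
      (hasDerivAt_mul_exp_add_mul_pow_div_factorial A C · n) (by fun_prop)
    calc u t ≤ A + ∫ s in 0..t, g s * P s := hstep t ht P hPcont hbound
      _ = A * exp (G t) + C * (G t ^ (n + 1) / (n + 1)!) := by
        rw [hint]
        simp only [exp_zero, mul_one, zero_pow n.succ_ne_zero, zero_div, mul_zero, add_zero]
        ring

theorem le_mul_exp_integral_of_delay (hA : 0 ≤ A) (hg : ∀ s ∈ Icc 0 T, 0 ≤ g s)
    (hgi : IntervalIntegrable g volume 0 T) (hσ : ∀ s ∈ Icc 0 T, σ s ≤ s)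
    (hpast : ∀ s ∈ Icc 0 T, σ s < 0 → u (σ s) ≤ A)
    (hstep : ∀ t ∈ Icc 0 T, ∀ P : ℝ → ℝ, ContinuousOn P (Icc 0 T) →
      (∀ s ∈ Icc 0 t, u (σ s) ≤ P s) → u t ≤ A + ∫ s in 0..t, g s * P s)
    (hbdd : BddAbove (u '' Icc 0 T)) :
    ∀ t ∈ Icc 0 T, u t ≤ A * exp (∫ s in 0..t, g s) := by
  obtain ⟨C, hC⟩ := hbdd
  intro t ht
  have hiter := fun n => le_mul_exp_add_pow_div_factorial_of_delay hA hg hgi hσ hpast hstep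
    (le_max_right C 0) (fun t ht => (hC (mem_image_of_mem u ht)).trans (le_max_left C 0)) n t ht
  refine ge_of_tendsto' (x := atTop) ?_ hiter
  simpa using tendsto_const_nhds.add
    ((FloorSemiring.tendsto_pow_div_factorial_atTop (∫ s in 0..t, g s)).const_mul (max C 0))

end DelayGronwall

theorem norm_duhamel_le {H : Type*} [NormedAddCommGroup H] [NormedSpace ℝ H]
    {S : ℝ → H →L[ℝ] H} {M : ℝ} (hS : ∀ t ≥ 0, ‖S t‖ ≤ M) (B : H →L[ℝ] H) {k : ℝ → ℝ}
    {V : ℝ → H} {P : ℝ → ℝ} {t : ℝ} (ht : 0 ≤ t) (hk : IntervalIntegrable k volume 0 t)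
    (hP : ContinuousOn P (Icc 0 t)) (hV : ∀ s ∈ Icc 0 t, ‖V s‖ ≤ P s) (x : H) :
    ‖S t x + ∫ s in 0..t, k s • S (t - s) (B (V s))‖ ≤
      M * ‖x‖ + ∫ s in 0..t, M * ‖B‖ * |k s| * P s := by
  have hM : 0 ≤ M := (norm_nonneg _).trans (hS 0 le_rfl)
  refine (norm_add_le _ _).trans (add_le_add ((S t).le_of_opNorm_le (hS t ht) x) ?_)
  refine intervalIntegral.norm_integral_le_of_norm_le ht (Eventually.of_forall fun s hs => ?_)
    ((hk.abs.const_mul _).mul_continuousOn (by rwa [uIcc_of_le ht]))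
  calc ‖k s • S (t - s) (B (V s))‖ = |k s| * ‖S (t - s) (B (V s))‖ := by
        rw [norm_smul, Real.norm_eq_abs]
    _ ≤ |k s| * (M * (‖B‖ * P s)) := by
        gcongr
        refine ((S (t - s)).le_of_opNorm_le (hS _ (sub_nonneg.2 hs.2)) _).trans ?_
        gcongr
        exact (B.le_opNorm _).trans (by gcongr; exact hV s ⟨hs.1.le, hs.2⟩)
    _ = M * ‖B‖ * |k s| * P s := by ring

theorem le_biSup_of_bddAbove_image {X : Type*} {v : X → ℝ} {s : Set X} (h : BddAbove (v '' s))
    {x : X} (hx : x ∈ s) : v x ≤ ⨆ y ∈ s, v y :=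
  le_ciSup₂ (f := fun y (_ : y ∈ s) => v y)
    (h.mono (iUnion_subset fun _ => range_subset_iff.2 fun hy => mem_image_of_mem v hy)) x hx

theorem norm_le_mul_exp_integral_of_duhamel {H : Type*} [NormedAddCommGroup H]
    [NormedSpace ℝ H] {M τb T F : ℝ} (hτb : 0 ≤ τb) {S : ℝ → H →L[ℝ] H}
    (hS : ∀ t ≥ 0, ‖S t‖ ≤ M) (B : H →L[ℝ] H) {k : ℝ → ℝ} (hk : IntervalIntegrable k volume 0 T)
    {τ : ℝ → ℝ} (hτ : ∀ s ∈ Icc 0 T, τ s ∈ Icc 0 τb) {f U : ℝ → H}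
    (hU : ContinuousOn U (Icc (-τb) T)) (hhist : ∀ s ∈ Icc (-τb) 0, U s = f s)
    (hfF : ∀ r ∈ Icc (-τb) 0, ‖f r‖ ≤ F)
    (hduh : ∀ t ∈ Icc 0 T,
      U t = S t (f 0) + ∫ s in 0..t, k s • S (t - s) (B (U (s - τ s)))) :
    ∀ t ∈ Icc 0 T, ‖U t‖ ≤ (M * ‖f 0‖ + F) * exp (∫ s in 0..t, M * ‖B‖ * |k s|) := by
  have hM : 0 ≤ M := (norm_nonneg _).trans (hS 0 le_rfl)
  have hF : 0 ≤ F := (norm_nonneg _).trans (hfF 0 ⟨neg_nonpos.2 hτb, le_rfl⟩)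
  have hpast : ∀ s ∈ Icc 0 T, s - τ s < 0 → ‖U (s - τ s)‖ ≤ M * ‖f 0‖ + F := by
    intro s hs hneg
    have hmem : s - τ s ∈ Icc (-τb) 0 := ⟨by linarith [hs.1, (hτ s hs).2], hneg.le⟩
    rw [hhist _ hmem]
    exact (hfF _ hmem).trans (le_add_of_nonneg_left (by positivity))
  have hstep : ∀ t ∈ Icc 0 T, ∀ P : ℝ → ℝ, ContinuousOn P (Icc 0 T) →
      (∀ s ∈ Icc 0 t, ‖U (s - τ s)‖ ≤ P s) →
      ‖U t‖ ≤ M * ‖f 0‖ + F + ∫ s in 0..t, M * ‖B‖ * |k s| * P s := by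
    intro t ht P hP hUP
    rw [hduh t ht]
    refine (norm_duhamel_le hS B ht.1
      (hk.mono_set (uIcc_subset_uIcc left_mem_uIcc (Icc_subset_uIcc ht)))
      (hP.mono (Icc_subset_Icc_right ht.2)) hUP (f 0)).trans ?_
    gcongr
    exact le_add_of_nonneg_right hF
  exact le_mul_exp_integral_of_delay (u := fun t => ‖U t‖) (σ := fun s => s - τ s)
    (by positivity) (fun s _ => by positivity) (hk.abs.const_mul _)
    (fun s hs => by linarith [(hτ s hs).1]) hpast hstep
    (isCompact_Icc.bddAbove_image (hU.norm.mono (Icc_subset_Icc_left (neg_nonpos.2 hτb))))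

theorem stmt_7_general {H : Type*} [NormedAddCommGroup H] [NormedSpace ℝ H]
    (M τb T : ℝ) (hτb : 0 < τb)
    (S : ℝ → H →L[ℝ] H) (hS : ∀ t ≥ (0:ℝ), ‖S t‖ ≤ M)
    (B : H →L[ℝ] H)
    (k : ℝ → ℝ) (hk : IntervalIntegrable k volume 0 T)
    (hsmall : M * ‖B‖ * ∫ s in (0:ℝ)..T, |k s| ≤ 1)
    (τ : ℝ → ℝ) (hτrange : ∀ s ∈ Icc (0:ℝ) T, τ s ∈ Icc (0:ℝ) τb)
    (f : ℝ → H) (hf : ContinuousOn f (Icc (-τb) (0:ℝ)))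
    (U : ℝ → H) (hU : ContinuousOn U (Icc (-τb) T))
    (hhist : ∀ s ∈ Icc (-τb) (0:ℝ), U s = f s)
    (hduh : ∀ t ∈ Icc (0:ℝ) T,
      U t = S t (f 0) + ∫ s in (0:ℝ)..t, k s • (S (t - s)) (B (U (s - τ s)))) :
    ∀ t ∈ Icc (0:ℝ) T,
      ‖U t‖ ≤ Real.exp 1 * (M * ‖f 0‖ + ⨆ r ∈ Icc (-τb) (0:ℝ), ‖f r‖) := by
  intro t ht
  have hF : 0 ≤ ⨆ r ∈ Icc (-τb) (0:ℝ), ‖f r‖ :=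
    Real.iSup_nonneg fun _ => Real.iSup_nonneg fun _ => norm_nonneg _
  have hM : 0 ≤ M := (norm_nonneg _).trans (hS 0 le_rfl)
  have hG : ∫ s in 0..t, M * ‖B‖ * |k s| ≤ 1 :=
    (intervalIntegral.integral_mono_interval le_rfl ht.1 ht.2
      (ae_of_all _ fun s => by positivity) (hk.abs.const_mul _)).trans
      ((intervalIntegral.integral_const_mul _ _).trans_le hsmall)
  calc ‖U t‖ ≤ (M * ‖f 0‖ + ⨆ r ∈ Icc (-τb) (0:ℝ), ‖f r‖) *
        exp (∫ s in 0..t, M * ‖B‖ * |k s|) :=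
      norm_le_mul_exp_integral_of_duhamel hτb.le hS B hk hτrange hU hhist
        (fun r => le_biSup_of_bddAbove_image (isCompact_Icc.bddAbove_image hf.norm)) hduh t ht
    _ ≤ (M * ‖f 0‖ + ⨆ r ∈ Icc (-τb) (0:ℝ), ‖f r‖) * exp 1 := by gcongr
    _ = exp 1 * (M * ‖f 0‖ + ⨆ r ∈ Icc (-τb) (0:ℝ), ‖f r‖) := mul_comm _ _

/-- A priori bound on the solution of the Duhamel formula under the smallness condition. -/
theorem stmt_7 {H : Type*} [NormedAddCommGroup H] [NormedSpace ℝ H] [CompleteSpace H]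
    (M τb T : ℝ) (hM : 1 ≤ M) (hτb : 0 < τb) (hT : 0 < T)
    (S : ℝ → H →L[ℝ] H) (hS : ∀ t ≥ (0:ℝ), ‖S t‖ ≤ M)
    (B : H →L[ℝ] H)
    (k : ℝ → ℝ) (hk : IntervalIntegrable k volume 0 T)
    (hsmall : M * ‖B‖ * ∫ s in (0:ℝ)..T, |k s| ≤ 1)
    (τ : ℝ → ℝ) (hτrange : ∀ s ∈ Icc (0:ℝ) T, τ s ∈ Icc (0:ℝ) τb)
    (f : ℝ → H) (hf : ContinuousOn f (Icc (-τb) (0:ℝ)))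
    (U : ℝ → H) (hU : ContinuousOn U (Icc (-τb) T))
    (hhist : ∀ s ∈ Icc (-τb) (0:ℝ), U s = f s)
    (hduh : ∀ t ∈ Icc (0:ℝ) T,
      U t = S t (f 0) + ∫ s in (0:ℝ)..t, k s • (S (t - s)) (B (U (s - τ s)))) :
    ∀ t ∈ Icc (0:ℝ) T,
      ‖U t‖ ≤ Real.exp 1 * (M * ‖f 0‖ + ⨆ r ∈ Icc (-τb) (0:ℝ), ‖f r‖) :=
  stmt_7_general M τb T hτb S hS B k hk hsmall τ hτrange f hf U hU hhist hduh
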